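/- The inverse Mills ratio λ(ν) = φ(ν)/Φ(ν) is strictly decreasing on ℝ. -/

import Mathlib

open MeasureTheory Real Set Filter

noncomputable def stdPdf (x : ℝ) : ℝ := (Real.sqrt (2 * Real.pi))⁻¹ * Real.exp (-(x ^ 2) / 2)

noncomputable def stdCdf (x : ℝ) : ℝ := ∫ v in Set.Iio x, stdPdf v

noncomputable def Phi2 (μ ν ρ : ℝ) : ℝ :=
  ∫ v in Set.Iio μ, stdCdf ((ν - ρ * v) / Real.sqrt (1 - ρ ^ 2)) * stdPdf v

noncomputable def phi2 (μ ν ρ : ℝ) : ℝ :=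
  (2 * Real.pi * Real.sqrt (1 - ρ ^ 2))⁻¹ *
    Real.exp (-(μ ^ 2 - 2 * ρ * μ * ν + ν ^ 2) / (2 * (1 - ρ ^ 2)))

open Topology

/-!
Since `φ' = -ν φ` and `Φ' = φ`, the derivative of `φ / Φ` is `-φ (ν Φ + φ) / Φ²`. Integrating
`t φ(t) = -φ'(t)` over `t < ν` gives `ν Φ(ν) + φ(ν) = ∫_{t < ν} (ν - t) φ(t) dt`, which is positive,
so the derivative is negative everywhere.
-/

lemma setIntegral_Iio_pos {f : ℝ → ℝ} {x : ℝ} (hf : IntegrableOn f (Iio x))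
    (hpos : ∀ t < x, 0 < f t) : 0 < ∫ t in Iio x, f t := by
  rw [setIntegral_pos_iff_support_of_nonneg_ae
    ((ae_restrict_iff' measurableSet_Iio).2 (.of_forall fun t ht => (hpos t ht).le)) hf,
    inter_eq_self_of_subset_right (s := f.support) (t := Iio x) fun t ht => (hpos t ht).ne']
  simp

lemma hasDerivAt_integral_Iio {f : ℝ → ℝ} {x : ℝ} (hf : Integrable f) (hfx : ContinuousAt f x) :
    HasDerivAt (fun y => ∫ t in Iio y, f t) (f x) x := by
  have split : (fun y => ∫ t in Iio y, f t) = fun y => (∫ t in Iio 0, f t) + ∫ t in 0..y, f t := by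
    funext y
    rw [← integral_Iic_eq_integral_Iio, ← integral_Iic_eq_integral_Iio,
      ← intervalIntegral.integral_Iic_sub_Iic hf.integrableOn hf.integrableOn]
    ring
  rw [split]
  exact (intervalIntegral.integral_hasDerivAt_right hf.intervalIntegrable
    hf.aestronglyMeasurable.stronglyMeasurableAtFilter hfx).const_add _

lemma stdPdf_pos (x : ℝ) : 0 < stdPdf x := by
  unfold stdPdf
  positivity

lemma stdPdf_eq_mul_exp_neg_mul_sq (x : ℝ) :
    stdPdf x = (√(2 * π))⁻¹ * rexp (-(1 / 2) * x ^ 2) := by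
  simp only [stdPdf]
  ring_nf

lemma continuous_stdPdf : Continuous stdPdf := by
  unfold stdPdf
  fun_prop

lemma integrable_stdPdf : Integrable stdPdf := by
  simp only [funext stdPdf_eq_mul_exp_neg_mul_sq]
  exact (integrable_exp_neg_mul_sq (by norm_num)).const_mul _

lemma integrable_id_mul_stdPdf : Integrable fun t => t * stdPdf t := by
  simp only [stdPdf_eq_mul_exp_neg_mul_sq, mul_left_comm _ (√(2 * π))⁻¹]
  exact (integrable_mul_exp_neg_mul_sq (by norm_num)).const_mul _

lemma hasDerivAt_stdPdf (x : ℝ) : HasDerivAt stdPdf (-x * stdPdf x) x := by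
  have hexponent : HasDerivAt (fun t : ℝ => -(t ^ 2) / 2) (-x) x :=
    ((hasDerivAt_pow 2 x).neg.div_const 2).congr_deriv (by ring)
  exact ((hexponent.exp).const_mul _).congr_deriv (by simp only [stdPdf]; ring)

lemma tendsto_stdPdf_atBot : Tendsto stdPdf atBot (𝓝 0) := by
  have hsq : Tendsto (fun x : ℝ => x ^ 2 / 2) atBot atTop := by
    simpa only [sq, id] using (tendsto_id.atBot_mul_atBot₀ tendsto_id).atTop_div_const two_pos
  have hexp := (tendsto_exp_neg_atTop_nhds_zero.comp hsq).const_mul (√(2 * π))⁻¹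
  rw [mul_zero] at hexp
  refine hexp.congr fun x => ?_
  simp only [Function.comp_apply, stdPdf, neg_div]

lemma stdCdf_pos (x : ℝ) : 0 < stdCdf x :=
  setIntegral_Iio_pos integrable_stdPdf.integrableOn fun t _ => stdPdf_pos t

lemma hasDerivAt_stdCdf (x : ℝ) : HasDerivAt stdCdf (stdPdf x) x :=
  hasDerivAt_integral_Iio integrable_stdPdf continuous_stdPdf.continuousAt

lemma integral_Iio_id_mul_stdPdf (x : ℝ) : ∫ t in Iio x, t * stdPdf t = -stdPdf x := by
  rw [← integral_Iic_eq_integral_Iio, ← sub_zero (-stdPdf x), ← neg_zero]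
  exact integral_Iic_of_hasDerivAt_of_tendsto' (f := fun t => -stdPdf t)
    (fun t _ => (hasDerivAt_stdPdf t).neg.congr_deriv (by ring))
    integrable_id_mul_stdPdf.integrableOn tendsto_stdPdf_atBot.neg

lemma mul_stdCdf_add_stdPdf_pos (x : ℝ) : 0 < x * stdCdf x + stdPdf x := by
  have hint : Integrable fun t => (x - t) * stdPdf t := by
    simpa only [sub_mul, Pi.sub_def] using (integrable_stdPdf.const_mul x).sub integrable_id_mul_stdPdf
  have hrepr : x * stdCdf x + stdPdf x = ∫ t in Iio x, (x - t) * stdPdf t := by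
    simp only [sub_mul]
    rw [integral_sub (integrable_stdPdf.const_mul x).integrableOn
      integrable_id_mul_stdPdf.integrableOn, integral_const_mul, integral_Iio_id_mul_stdPdf,
      stdCdf, sub_neg_eq_add]
  rw [hrepr]
  exact setIntegral_Iio_pos hint.integrableOn fun t ht => mul_pos (sub_pos.2 ht) (stdPdf_pos t)

lemma hasDerivAt_stdPdf_div_stdCdf (x : ℝ) :
    HasDerivAt (fun ν => stdPdf ν / stdCdf ν)
      (-(stdPdf x * (x * stdCdf x + stdPdf x)) / stdCdf x ^ 2) x :=
  ((hasDerivAt_stdPdf x).div (hasDerivAt_stdCdf x) (stdCdf_pos x).ne').congr_deriv (by ring)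

theorem stmt8 : StrictAnti (fun ν => stdPdf ν / stdCdf ν) :=
  strictAnti_of_hasDerivAt_neg hasDerivAt_stdPdf_div_stdCdf fun x =>
    div_neg_of_neg_of_pos (neg_neg_of_pos (mul_pos (stdPdf_pos x) (mul_stdCdf_add_stdPdf_pos x)))
      (pow_pos (stdCdf_pos x) 2)
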